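/- arXiv:math/0702558 — 11 statements merged into one kernel-verified Lean document; each statement's English description precedes it below -/
import Mathlib

section
/- For each non-zero integer x there exist integers a and b such that a*x = (2b-1)*(3b-1). -/
theorem stmt_0 : ∀ x : ℤ, x ≠ 0 → ∃ a b : ℤ, a * x = (2 * b - 1) * (3 * b - 1) := by
  intro x hx
  suffices h : ∃ b : ℤ, x ∣ (2 * b - 1) * (3 * b - 1) by
    obtain ⟨b, a, ha⟩ := h
    exact ⟨a, b, by linarith [ha]⟩
  set n := x.natAbs with hn_def
  have hn : n ≠ 0 := Int.natAbs_ne_zero.mpr hx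
  set m := n.factorization 2 with hm_def
  set o : ℤ := ((n / 2 ^ m : ℕ) : ℤ) with ho_def
  have hodd : ¬ (2 : ℤ) ∣ o := by
    have h2 := Nat.not_dvd_ordCompl Nat.prime_two hn
    rw [ho_def]
    exact_mod_cast h2
  have hco1 : IsCoprime (2 : ℤ) o := (Int.prime_two.coprime_iff_not_dvd).mpr hodd
  have hco2 : IsCoprime (3 : ℤ) ((2:ℤ) ^ m) := by
    apply IsCoprime.pow_right
    norm_num [Int.isCoprime_iff_gcd_eq_one]
  have hco3 : IsCoprime o ((2:ℤ) ^ m) := (hco1.pow_left).symm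
  obtain ⟨u, v, huv⟩ := hco1
  obtain ⟨u2, v2, huv2⟩ := hco2
  obtain ⟨s, t, hst⟩ := hco3
  -- b1 = u, b2 = u2
  set b : ℤ := u2 * s * o + u * t * 2 ^ m with hb_def
  have h1 : o ∣ 2 * b - 1 := by
    refine ⟨2 * u2 * s + (-v) * t * 2 ^ m - s, ?_⟩
    have h2u : 2 * u - 1 = o * (-v) := by linarith [huv]
    rw [hb_def]; linear_combination t * 2 ^ m * h2u + hst
  have h2 : (2:ℤ) ^ m ∣ 3 * b - 1 := by
    refine ⟨(-v2) * s * o + 3 * u * t - t, ?_⟩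
    have h3u : 3 * u2 - 1 = 2 ^ m * (-v2) := by linarith [huv2]
    rw [hb_def]; linear_combination s * o * h3u + hst
  refine ⟨b, dvd_trans (b := (n : ℤ)) ?_ ?_⟩
  · exact Int.natAbs_dvd.mp (dvd_refl (n : ℤ))
  · have heq : (n : ℤ) = o * 2 ^ m := by
      have h := Nat.ordProj_mul_ordCompl_eq_self n 2
      have h' : ((2:ℤ)) ^ m * o = (n : ℤ) := by rw [ho_def]; exact_mod_cast h
      linarith
    rw [heq]
    exact mul_dvd_mul h1 h2
end

section
/- Let q, a, b, c, d be integers with q ≥ 2, q square-free, (b ≠ 0 or d ≠ 0), and (a + b*√q)*(c + d*√q) = 1. Then (a ≥ 1 and b ≥ 1) or (a ≤ -1 and b ≤ -1) or (c ≥ 1 and d ≥ 1) or (c ≤ -1 and d ≤ -1). -/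
/-!
Put `u = a + b√q` and `v = c + d√q` in `ℤ√q`. Since `q` is not a square, `ℤ√q → ℝ` is injective,
so `u * v = 1` already holds in `ℤ√q`: `u` and `v` are units, of norm `±1`. Neither is `±1`, and
`|u| |v| = 1`, so one of them, say `u`, has `|u| > 1`. Its conjugate `ū = a - b√q` then satisfies
`|ū| = 1 / |u| < 1`, and `2a = u + ū`, `2b√q = u - ū` both have the sign of `u`.
-/

theorem Squarefree.ne_mul_self_of_not_isUnit {M : Type*} [Monoid M] {x : M} (hsq : Squarefree x)
    (hx : ¬IsUnit x) (n : M) : x ≠ n * n := by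
  rintro rfl
  exact hx ((hsq n dvd_rfl).mul (hsq n dvd_rfl))

namespace Zsqrtd

variable {d : ℤ} (h0 : 0 ≤ d)

theorem toReal_mul_toReal_star (z : ℤ√d) : toReal h0 z * toReal h0 (star z) = z.norm := by
  rw [← map_mul, ← map_intCast (toReal h0), norm_eq_mul_conj]

theorem one_le_re_and_one_le_im_of_one_lt_toReal {z : ℤ√d} (hz : IsUnit z)
    (h1 : 1 < toReal h0 z) : 1 ≤ z.re ∧ 1 ≤ z.im := by
  have hnorm : |(z.norm : ℝ)| = 1 := by
    rw [← Int.cast_abs, Int.abs_eq_natAbs, norm_eq_one_iff.mpr hz]; norm_num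
  have hstar : |toReal h0 (star z)| < 1 := by
    rw [← toReal_mul_toReal_star h0, abs_mul, abs_of_pos (by linarith)] at hnorm
    nlinarith [abs_nonneg (toReal h0 (star z))]
  obtain ⟨hlo, hhi⟩ := abs_lt.mp hstar
  simp only [toReal_apply, re_star, im_star, Int.cast_neg, neg_mul] at h1 hlo hhi
  have hsqrt : 0 ≤ √(d : ℝ) := Real.sqrt_nonneg _
  have hre : (0 : ℝ) < z.re := by linarith
  have him : (0 : ℝ) < z.im := pos_of_mul_pos_left (by linarith) hsqrt
  exact ⟨by exact_mod_cast hre, by exact_mod_cast him⟩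

theorem re_im_sign_of_one_lt_abs_toReal {z : ℤ√d} (hz : IsUnit z) (h1 : 1 < |toReal h0 z|) :
    (1 ≤ z.re ∧ 1 ≤ z.im) ∨ (z.re ≤ -1 ∧ z.im ≤ -1) := by
  rcases lt_abs.mp h1 with hpos | hneg
  · exact .inl (one_le_re_and_one_le_im_of_one_lt_toReal h0 hz hpos)
  · have := one_le_re_and_one_le_im_of_one_lt_toReal h0 hz.neg (by rwa [map_neg])
    simp only [re_neg, im_neg] at this
    exact .inr ⟨by omega, by omega⟩

variable (hd : ∀ n : ℤ, d ≠ n * n)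
include hd

theorem abs_toReal_ne_one {z : ℤ√d} (hz : z.im ≠ 0) : |toReal h0 z| ≠ 1 := by
  intro h
  rcases abs_eq (zero_le_one' ℝ) |>.mp h with h | h
  · exact hz (by rw [toReal_injective h0 hd (h.trans (map_one _).symm), im_one])
  · exact hz (by rw [toReal_injective h0 hd (h.trans (by rw [map_neg, map_one])), im_neg, im_one,
      neg_zero])

theorem one_lt_abs_toReal_or {u v : ℤ√d} (huv : u * v = 1) (hu : u.im ≠ 0) :
    1 < |toReal h0 u| ∨ 1 < |toReal h0 v| := by
  have hprod : |toReal h0 u| * |toReal h0 v| = 1 := by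
    rw [← abs_mul, ← map_mul, huv, map_one, abs_one]
  rcases (abs_toReal_ne_one h0 hd hu).lt_or_gt with hlt | hgt
  · exact .inr (by nlinarith [abs_nonneg (toReal h0 u), abs_nonneg (toReal h0 v)])
  · exact .inl hgt

end Zsqrtd

theorem stmt_1 (q a b c d : ℤ) (hq : 2 ≤ q) (hsf : Squarefree q)
    (hbd : b ≠ 0 ∨ d ≠ 0)
    (h : ((a : ℝ) + (b : ℝ) * Real.sqrt (q : ℝ)) * ((c : ℝ) + (d : ℝ) * Real.sqrt (q : ℝ)) = 1) :
    (1 ≤ a ∧ 1 ≤ b) ∨ (a ≤ -1 ∧ b ≤ -1) ∨ (1 ≤ c ∧ 1 ≤ d) ∨ (c ≤ -1 ∧ d ≤ -1) := by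
  have h0 : 0 ≤ q := by omega
  have hnsq : ∀ n : ℤ, q ≠ n * n :=
    hsf.ne_mul_self_of_not_isUnit (by rw [Int.isUnit_iff]; omega)
  let u : ℤ√q := ⟨a, b⟩
  let v : ℤ√q := ⟨c, d⟩
  have huv : u * v = 1 :=
    Zsqrtd.toReal_injective h0 hnsq (by rw [map_mul, map_one]; exact h)
  have hvu : v * u = 1 := mul_comm u v ▸ huv
  have hu : IsUnit u := IsUnit.of_mul_eq_one v huv
  have hv : IsUnit v := IsUnit.of_mul_eq_one u hvu
  have hlarge : 1 < |Zsqrtd.toReal h0 u| ∨ 1 < |Zsqrtd.toReal h0 v| := by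
    rcases hbd with hb | hd
    · exact Zsqrtd.one_lt_abs_toReal_or h0 hnsq huv hb
    · exact (Zsqrtd.one_lt_abs_toReal_or h0 hnsq hvu hd).symm
  rcases hlarge with hlarge | hlarge
  · rcases Zsqrtd.re_im_sign_of_one_lt_abs_toReal h0 hu hlarge with h | h <;> tauto
  · rcases Zsqrtd.re_im_sign_of_one_lt_abs_toReal h0 hv hlarge with h | h <;> tauto
end

section
/- Let k ≥ 273 be an integer such that p = 2 + k^2 is prime, and let R = Z[1/p] = { x/p^m : x ∈ Z, m ≥ 0 } be the subring of Q generated by 1/p. The system x1 = 1, x1 + x1 = x2, x3·x3 = x4, x2 + x4 = x5, x5·x6 = x1 has a solution in R^6 (namely (1, 2, k, k^2, 2+k^2, 1/(2+k^2))), but every solution (x1,...,x6) ∈ R^6 satisfies |x5| > 2^(2^4) = 65536. -/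
/-!
If `x * y = 1` in `ℤ[1/p]`, clearing denominators gives `z * w = p ^ N` in `ℤ`, so primality of
`p` forces `|z|` to be a power of `p` and hence `|x|` to be an integral power of `p`. In the system,
`x₅ = 2 + x₃²` is at least `2 > 1`, so this power has positive exponent and `|x₅| ≥ p = 2 + k² > 2¹⁶`.
-/

/-- The ring `ℤ[1/p]`, as a subset of `ℚ`. -/
def zAdjoinInv (p : ℚ) : Set ℚ :=
  {x | ∃ (z : ℤ) (m : ℕ), x = z / p ^ m}

lemma intCast_mem_zAdjoinInv (p : ℚ) (z : ℤ) : (z : ℚ) ∈ zAdjoinInv p :=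
  ⟨z, 0, by simp⟩

lemma inv_mem_zAdjoinInv (p : ℚ) : p⁻¹ ∈ zAdjoinInv p :=
  ⟨1, 1, by simp⟩

lemma Int.abs_eq_pow_of_mul_eq_prime_pow {p z w : ℤ} (hp : Prime p) (hp0 : 0 ≤ p) {n : ℕ}
    (h : z * w = p ^ n) : ∃ i : ℕ, |z| = p ^ i := by
  obtain ⟨i, -, hzi⟩ := (dvd_prime_pow hp n).mp ⟨w, h.symm⟩
  refine ⟨i, ?_⟩
  rcases Int.associated_iff.mp hzi with rfl | rfl <;> simp [abs_of_nonneg (pow_nonneg hp0 i)]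

lemma abs_eq_zpow_of_mul_eq_one {p : ℤ} (hp : Prime p) (hp0 : 0 < p) {x y : ℚ}
    (hx : x ∈ zAdjoinInv p) (hy : y ∈ zAdjoinInv p) (hxy : x * y = 1) :
    ∃ j : ℤ, |x| = (p : ℚ) ^ j := by
  obtain ⟨z, m, rfl⟩ := hx
  obtain ⟨w, n, rfl⟩ := hy
  have hpq : (0 : ℚ) < p := by exact_mod_cast hp0
  have hzw : z * w = p ^ (m + n) := by
    have : (z : ℚ) * w = (p : ℚ) ^ (m + n) := by
      field_simp at hxy
      rw [hxy, pow_add]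
    exact_mod_cast this
  obtain ⟨i, hi⟩ := Int.abs_eq_pow_of_mul_eq_prime_pow hp hp0.le hzw
  refine ⟨(i : ℤ) - m, ?_⟩
  rw [abs_div, abs_of_pos (pow_pos hpq m), ← Int.cast_abs, hi, zpow_sub₀ hpq.ne']
  push_cast
  rfl

lemma le_of_one_lt_zpow {α : Type*} [Field α] [LinearOrder α] [IsStrictOrderedRing α] {a : α}
    (ha : 1 < a) {j : ℤ} (h : 1 < a ^ j) : a ≤ a ^ j := by
  have hj : 1 ≤ j := (one_lt_zpow_iff_right₀ ha).mp h
  simpa using (zpow_le_zpow_iff_right₀ ha).mpr hj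

theorem stmt_2 (k : ℤ) (hk : 273 ≤ k) (hp : Prime (2 + k ^ 2)) :
    (∃ x : Fin 6 → ℚ, (∀ i, ∃ (z : ℤ) (m : ℕ), x i = (z : ℚ) / ((2 + (k : ℚ) ^ 2) ^ m)) ∧
      x 0 = 1 ∧ x 0 + x 0 = x 1 ∧ x 2 * x 2 = x 3 ∧ x 1 + x 3 = x 4 ∧ x 4 * x 5 = x 0) ∧
    (∀ x : Fin 6 → ℚ, (∀ i, ∃ (z : ℤ) (m : ℕ), x i = (z : ℚ) / ((2 + (k : ℚ) ^ 2) ^ m)) →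
      x 0 = 1 → x 0 + x 0 = x 1 → x 2 * x 2 = x 3 → x 1 + x 3 = x 4 → x 4 * x 5 = x 0 →
      |x 4| > 2 ^ 2 ^ 4) := by
  have hpq : 2 + (k : ℚ) ^ 2 = ((2 + k ^ 2 : ℤ) : ℚ) := by push_cast; rfl
  have hp0 : (0 : ℚ) < ((2 + k ^ 2 : ℤ) : ℚ) := by positivity
  simp only [hpq]
  refine ⟨⟨![(1 : ℤ), (2 : ℤ), k, (k ^ 2 : ℤ), (2 + k ^ 2 : ℤ), ((2 + k ^ 2 : ℤ) : ℚ)⁻¹],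
    fun i => ?_, by simp, by norm_num, by simp [sq], by simp, by simpa using mul_inv_cancel₀ hp0.ne'⟩, ?_⟩
  · fin_cases i
    all_goals first
      | exact intCast_mem_zAdjoinInv _ _
      | exact inv_mem_zAdjoinInv _
  · intro x hx h0 h1 h3 h4 h5
    have hx4 : 2 ≤ x 4 := by rw [← h4, ← h1, ← h3, h0]; nlinarith [mul_self_nonneg (x 2)]
    obtain ⟨j, hj⟩ := abs_eq_zpow_of_mul_eq_one hp (by exact_mod_cast hp0) (hx 4) (hx 5) (h5.trans h0)
    have hbig : (2 : ℚ) ^ 2 ^ 4 < ((2 + k ^ 2 : ℤ) : ℚ) := by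
      have : (273 : ℚ) ≤ k := by exact_mod_cast hk
      push_cast
      nlinarith
    calc (2 : ℚ) ^ 2 ^ 4 < ((2 + k ^ 2 : ℤ) : ℚ) := hbig
      _ ≤ |x 4| := hj ▸ le_of_one_lt_zpow ((one_le_pow₀ one_le_two).trans_lt hbig) (by linarith [le_abs_self (x 4)])
end

section
/- The system x1 = 1, x2 + x3 = x1, x2·x3 = x4, x5·x5 = x6, x1 + x6 = x4 has a solution in the ring Z[√(-2^32 - 2^16 - 1)] = { x + y·√(-2^32 - 2^16 - 1) : x, y ∈ Z } (a subring of C), but has no solution in Z^6, and every solution in Z[√(-2^32 - 2^16 - 1)]^6 contains a coordinate of absolute value greater than 2^(2^4) = 65536. -/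
/-!
Every solution satisfies `x₁ (1 - x₁) = 1 + x₄²`. In an ordered ring the left side is at most `1/4`,
so there is no solution in `ℤ`. In `ℤ[√-D]`, if `x₄` were an integer, comparing `√-D`-parts would give
`x₁.im (1 - 2 x₁.re) = 0`, hence `x₁ ∈ ℤ` too, which is again impossible. So `x₄ = a + b√-D` with
`b ≠ 0`, and `|x₄|² = a² + D b² ≥ D = 2³² + 2¹⁶ + 1 > (2¹⁶)²`. Conversely, any `s` with
`s² = -(m² + m + 1)` yields the solution `(1, m + 1, -m, -(m² + m), s, -(m² + m + 1))`; take `m = 2¹⁶`.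
-/

open Complex

def IsSolution {R : Type*} [CommRing R] (x : Fin 6 → R) : Prop :=
  x 0 = 1 ∧ x 1 + x 2 = x 0 ∧ x 1 * x 2 = x 3 ∧ x 4 * x 4 = x 5 ∧ x 0 + x 5 = x 3

section

variable {R S : Type*} [CommRing R] [CommRing S]

theorem isSolution_comp_iff {f : R →+* S} (hf : Function.Injective f) {x : Fin 6 → R} :
    IsSolution (f ∘ x) ↔ IsSolution x := by
  simp only [IsSolution, Function.comp_apply, ← map_one f, ← map_add, ← map_mul, hf.eq_iff]

theorem IsSolution.map {x : Fin 6 → R} (h : IsSolution x) (f : R →+* S) : IsSolution (f ∘ x) := by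
  obtain ⟨h0, h12, h3, h5, h05⟩ := h
  refine ⟨?_, ?_, ?_, ?_, ?_⟩
  · simp [h0]
  · simpa using congrArg f h12
  · simpa using congrArg f h3
  · simpa using congrArg f h5
  · simpa using congrArg f h05

theorem isSolution_of_mul_self_eq (m s : R) (hs : s * s = -(m ^ 2 + m + 1)) :
    IsSolution ![1, m + 1, -m, -(m ^ 2 + m), s, -(m ^ 2 + m + 1)] := by
  refine ⟨rfl, ?_, ?_, hs, ?_⟩ <;>
    (simp only [Matrix.cons_val_one, Matrix.cons_val_zero, Matrix.cons_val]; ring)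

theorem IsSolution.mul_one_sub_eq {x : Fin 6 → R} (h : IsSolution x) :
    x 1 * (1 - x 1) = 1 + x 4 ^ 2 := by
  obtain ⟨h0, h12, h3, h5, h05⟩ := h
  linear_combination h3 - h05 - h5 - x 1 * h12 + (1 - x 1) * h0

end

theorem mul_one_sub_lt_one_add_sq {R : Type*} [CommRing R] [LinearOrder R] [IsStrictOrderedRing R]
    (a b : R) : a * (1 - a) < 1 + b ^ 2 := by
  nlinarith [sq_nonneg (2 * a - 1), sq_nonneg b]

theorem not_isSolution {R : Type*} [CommRing R] [LinearOrder R] [IsStrictOrderedRing R]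
    (x : Fin 6 → R) : ¬ IsSolution x :=
  fun h => (mul_one_sub_lt_one_add_sq (x 1) (x 4)).ne h.mul_one_sub_eq

theorem IsSolution.im_ne_zero {d : ℤ} {y : Fin 6 → ℤ√d} (h : IsSolution y) : (y 4).im ≠ 0 := by
  intro h4
  have key := h.mul_one_sub_eq
  have him := congrArg Zsqrtd.im key
  have hre := congrArg Zsqrtd.re key
  simp only [sq, Zsqrtd.im_mul, Zsqrtd.re_mul, Zsqrtd.im_sub, Zsqrtd.re_sub, Zsqrtd.im_add,
    Zsqrtd.re_add, Zsqrtd.im_one, Zsqrtd.re_one, h4] at him hre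
  have h1 : (y 1).im = 0 := by
    have : (y 1).im * (1 - 2 * (y 1).re) = 0 := by linarith
    exact (mul_eq_zero.mp this).resolve_right (by omega)
  simp only [h1] at hre
  exact (mul_one_sub_lt_one_add_sq (y 1).re (y 4).re).ne (by linarith)

namespace Zsqrtd

theorem neg_le_norm_of_im_ne_zero {d : ℤ} (hd : d ≤ 0) {z : ℤ√d} (hz : z.im ≠ 0) :
    -d ≤ z.norm := by
  have : 1 ≤ z.im * z.im := by nlinarith [Int.one_le_abs hz, abs_mul_abs_self z.im]
  rw [norm_def]
  nlinarith [mul_self_nonneg z.re]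

/-- `ℤ[√-D] ⊂ ℂ` is the image of this embedding, which sends `√-D` to `i √D`. -/
noncomputable def toComplex (D : ℕ) : ℤ√(-D) →+* ℂ :=
  lift ⟨I * √(D : ℝ), by
    rw [mul_mul_mul_comm, I_mul_I, ← ofReal_mul, Real.mul_self_sqrt D.cast_nonneg]; push_cast; ring⟩

theorem toComplex_apply (D : ℕ) (z : ℤ√(-D)) : toComplex D z = z.re + z.im * I * √(D : ℝ) := by
  simp [toComplex, mul_assoc]

theorem mem_range_toComplex {D : ℕ} {w : ℂ} :
    w ∈ Set.range (toComplex D) ↔ ∃ u v : ℤ, w = u + v * I * √(D : ℝ) := by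
  simp only [Set.mem_range, toComplex_apply]
  exact ⟨fun ⟨z, hz⟩ => ⟨z.re, z.im, hz.symm⟩, fun ⟨u, v, hw⟩ => ⟨⟨u, v⟩, hw.symm⟩⟩

theorem toComplex_injective {D : ℕ} (hD : 0 < D) : Function.Injective (toComplex D) :=
  lift_injective _ fun n h => by nlinarith [mul_self_nonneg n]

theorem norm_toComplex_sq (D : ℕ) (z : ℤ√(-D)) : ‖toComplex D z‖ ^ 2 = z.norm := by
  rw [← normSq_eq_norm_sq, toComplex_apply, normSq_apply, norm_def]
  simp only [add_re, intCast_re, mul_re, I_re, mul_zero, intCast_im, I_im, mul_one, sub_self,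
    ofReal_re, zero_mul, mul_im, add_zero, ofReal_im, add_im, zero_add, neg_mul, sub_neg_eq_add,
    Int.cast_add, Int.cast_mul, Int.cast_natCast, add_right_inj]
  rw [mul_mul_mul_comm, Real.mul_self_sqrt D.cast_nonneg]
  ring

theorem sqrt_le_norm_toComplex {D : ℕ} {z : ℤ√(-D)} (hz : z.im ≠ 0) :
    √(D : ℝ) ≤ ‖toComplex D z‖ := by
  rw [← Real.sqrt_sq (_root_.norm_nonneg (toComplex D z)), norm_toComplex_sq]
  refine Real.sqrt_le_sqrt ?_
  have := neg_le_norm_of_im_ne_zero (neg_nonpos.mpr D.cast_nonneg) hz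
  rw [neg_neg] at this
  exact_mod_cast this

end Zsqrtd

open Zsqrtd in
theorem stmt_3 :
    (∃ x : Fin 6 → ℂ,
      (∀ i, ∃ u v : ℤ, x i = (u : ℂ) + (v : ℂ) * Complex.I * Real.sqrt (2 ^ 32 + 2 ^ 16 + 1)) ∧
      x 0 = 1 ∧ x 1 + x 2 = x 0 ∧ x 1 * x 2 = x 3 ∧ x 4 * x 4 = x 5 ∧ x 0 + x 5 = x 3) ∧
    (¬ ∃ x : Fin 6 → ℤ,
      x 0 = 1 ∧ x 1 + x 2 = x 0 ∧ x 1 * x 2 = x 3 ∧ x 4 * x 4 = x 5 ∧ x 0 + x 5 = x 3) ∧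
    (∀ x : Fin 6 → ℂ,
      (∀ i, ∃ u v : ℤ, x i = (u : ℂ) + (v : ℂ) * Complex.I * Real.sqrt (2 ^ 32 + 2 ^ 16 + 1)) →
      x 0 = 1 → x 1 + x 2 = x 0 → x 1 * x 2 = x 3 → x 4 * x 4 = x 5 → x 0 + x 5 = x 3 →
      ∃ i, ‖x i‖ > 2 ^ 2 ^ 4) := by
  have hrange (w : ℂ) : w ∈ Set.range (toComplex (2 ^ 32 + 2 ^ 16 + 1)) ↔
      ∃ u v : ℤ, w = u + v * I * √(2 ^ 32 + 2 ^ 16 + 1) := by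
    rw [mem_range_toComplex]; simp only [Nat.cast_add, Nat.cast_pow, Nat.cast_ofNat, Nat.cast_one]
  refine ⟨?_, fun ⟨x, hx⟩ => not_isSolution x hx, ?_⟩
  · have hsol := (isSolution_of_mul_self_eq (2 ^ 16) sqrtd (by rw [dmuld]; push_cast; ring)).map
      (toComplex (2 ^ 32 + 2 ^ 16 + 1))
    exact ⟨_, fun i => (hrange _).mp ⟨_, rfl⟩, hsol⟩
  · intro x hx h0 h12 h3 h5 h05
    choose y hy using fun i => (hrange (x i)).mpr (hx i)
    have hsol : IsSolution y := by
      rw [← isSolution_comp_iff (toComplex_injective (by norm_num)), show _ ∘ y = x from funext hy]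
      exact ⟨h0, h12, h3, h5, h05⟩
    refine ⟨4, lt_of_lt_of_le ?_ (hy 4 ▸ sqrt_le_norm_toComplex hsol.im_ne_zero)⟩
    rw [Real.lt_sqrt (by positivity)]
    norm_num
end

section
/- Let p ≥ 13 be an integer such that 4p^4 - 1 is square-free, and let R = Z[√(4p^4 - 1)] = { x + y·√(4p^4 - 1) : x, y ∈ Z } ⊆ R. The system x1 = 1, x2·x3 = x1, x2 + x3 = x4, x5·x5 = x4 has a solution in R^5 (namely (1, 2p^2 + √(4p^4-1), 2p^2 - √(4p^4-1), 4p^2, 2p)), but every solution (x1,...,x5) ∈ R^5 satisfies |x2| > 2^(2^3) = 256 or |x3| > 2^(2^3) = 256. -/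
/-!
Work inside `ℤ√D`, `D = 4p⁴ - 1`, embedded in `ℝ` by `√D ↦ Real.sqrt D`; the embedding is
injective because `D ≡ 3 [ZMOD 4]` is not a square. The equation `x₂ x₃ = 1` makes `x₂` a unit, so
`x₃ = ±x̄₂`. If `x₂ ∈ ℤ` then `x₂ = x₃ = ±1` and `x₂ + x₃ = ±2` is not a square in `ℤ√D` (as
`D ≥ 3`). Otherwise `x₂ = a + b√D` with `b ≠ 0`, and `|x₂| + |x₃| ≥ |x₂ ∓ x₃| = 2|b|√D > 512`.
-/

theorem Int.mul_self_ne_four_mul_sub_one (n m : ℤ) : n * n ≠ 4 * m - 1 := by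
  intro h
  have h4 := congrArg (Int.cast : ℤ → ZMod 4) h
  push_cast at h4
  generalize (n : ZMod 4) = a at h4
  generalize (m : ZMod 4) = b at h4
  revert a b
  decide

namespace Zsqrtd

variable {d : ℤ}

theorem mul_self_ne_intCast_of_natAbs_eq_two (hd : 3 ≤ d) (y : ℤ√d) {n : ℤ} (hn : n.natAbs = 2) :
    y * y ≠ n := by
  intro h
  have hre : y.re * y.re + d * y.im * y.im = n := by simpa using congrArg re h
  have him : y.re * y.im + y.im * y.re = 0 := by simpa using congrArg im h
  rcases Int.natAbs_eq_iff.mp hn with rfl | rfl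
  · rcases mul_eq_zero.mp (by linarith : y.re * y.im = 0) with h0 | h0
    · rcases eq_or_ne y.im 0 with h1 | h1
      · simp [h0, h1] at hre
      · rw [h0] at hre
        push_cast at hre
        nlinarith [mul_self_pos.mpr h1]
    · rw [h0] at hre
      exact Int.sq_ne_two_mod_four y.re (by simp at hre; omega)
  · push_cast at hre
    nlinarith [mul_self_nonneg y.re, mul_nonneg (by linarith : 0 ≤ d) (mul_self_nonneg y.im)]

theorem eq_intCast_of_mul_eq_one_of_im_eq_zero {z w : ℤ√d} (hzw : z * w = 1) (hz : z.im = 0) :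
    ∃ u : ℤ, IsUnit u ∧ z = u ∧ w = u := by
  have hre : z.re * w.re = 1 := by simpa [hz] using congrArg re hzw
  have him : z.re * w.im = 0 := by simpa [hz] using congrArg im hzw
  have hu : IsUnit z.re := IsUnit.of_mul_eq_one _ hre
  refine ⟨z.re, hu, ?_, ?_⟩
  · ext <;> simp [hz]
  · have hw : w.im = 0 := (mul_eq_zero.mp him).resolve_left hu.ne_zero
    rcases Int.isUnit_iff.mp hu with h | h <;> rw [h] at hre <;> ext <;> simp [hw] <;> omega

theorem im_ne_zero_of_mul_eq_one_of_add_eq_mul_self (hd : 3 ≤ d) {z w y : ℤ√d}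
    (hzw : z * w = 1) (hy : y * y = z + w) : z.im ≠ 0 := by
  intro hz
  obtain ⟨u, hu, rfl, rfl⟩ := eq_intCast_of_mul_eq_one_of_im_eq_zero hzw hz
  refine mul_self_ne_intCast_of_natAbs_eq_two hd y (n := 2 * u) ?_ (by rw [hy]; push_cast; ring)
  rw [Int.natAbs_mul, Int.isUnit_iff_natAbs_eq.mp hu, mul_one]
  rfl

theorem eq_star_or_eq_neg_star_of_mul_eq_one {z w : ℤ√d} (hzw : z * w = 1) :
    w = star z ∨ w = -star z := by
  have hstar : star z = z.norm * w := by
    rw [norm_eq_mul_conj, mul_comm z, mul_assoc, hzw, mul_one]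
  rcases Int.isUnit_iff.mp ((isUnit_iff_norm_isUnit z).mp (IsUnit.of_mul_eq_one _ hzw)) with h | h
  · left; simp [hstar, h]
  · right; simp [hstar, h]

theorem toReal_sub_toReal_star (hd : 0 ≤ d) (z : ℤ√d) :
    toReal hd z - toReal hd (star z) = 2 * z.im * √(d : ℝ) := by
  rw [toReal_apply, toReal_apply, re_star, im_star]
  push_cast
  ring

theorem two_mul_sqrt_le_abs_toReal_add_abs_toReal (hd : 0 ≤ d) {z w : ℤ√d} (hzw : z * w = 1)
    (hz : z.im ≠ 0) : 2 * √(d : ℝ) ≤ |toReal hd z| + |toReal hd w| := by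
  have hw : |toReal hd w| = |toReal hd (star z)| := by
    rcases eq_star_or_eq_neg_star_of_mul_eq_one hzw with rfl | rfl
    · rfl
    · rw [map_neg, abs_neg]
  have him : (1 : ℝ) ≤ |(z.im : ℝ)| := by exact_mod_cast Int.one_le_abs hz
  calc 2 * √(d : ℝ) ≤ |2 * z.im * √(d : ℝ)| := by
        rw [abs_mul, abs_mul, abs_two, abs_of_nonneg (Real.sqrt_nonneg _)]
        nlinarith [Real.sqrt_nonneg (d : ℝ)]
    _ = |toReal hd z - toReal hd (star z)| := by rw [toReal_sub_toReal_star]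
    _ ≤ |toReal hd z| + |toReal hd w| := hw ▸ abs_sub _ _

theorem exists_toReal_eq (hd : 0 ≤ d) {x : ℝ} (hx : ∃ u v : ℤ, x = u + v * √(d : ℝ)) :
    ∃ z : ℤ√d, toReal hd z = x := by
  obtain ⟨u, v, rfl⟩ := hx
  exact ⟨⟨u, v⟩, toReal_apply hd _⟩

end Zsqrtd

open Zsqrtd in
theorem stmt_4_general (p : ℤ) (hp : 13 ≤ p) :
    (∃ x : Fin 5 → ℝ,
      (∀ i, ∃ u v : ℤ, x i = (u : ℝ) + (v : ℝ) * Real.sqrt ((4 * p ^ 4 - 1 : ℤ) : ℝ)) ∧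
      x 0 = 1 ∧ x 1 * x 2 = x 0 ∧ x 1 + x 2 = x 3 ∧ x 4 * x 4 = x 3) ∧
    (∀ x : Fin 5 → ℝ,
      (∀ i, ∃ u v : ℤ, x i = (u : ℝ) + (v : ℝ) * Real.sqrt ((4 * p ^ 4 - 1 : ℤ) : ℝ)) →
      x 0 = 1 → x 1 * x 2 = x 0 → x 1 + x 2 = x 3 → x 4 * x 4 = x 3 →
      |x 1| > 2 ^ 2 ^ 3 ∨ |x 2| > 2 ^ 2 ^ 3) := by
  set D : ℤ := 4 * p ^ 4 - 1 with hD
  have hD_ge : (256 * 256 + 1 : ℤ) ≤ D := by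
    nlinarith [pow_le_pow_left₀ (by norm_num : (0 : ℤ) ≤ 13) hp 4]
  have hD0 : 0 ≤ D := by linarith
  have hsqrt : (256 : ℝ) < √(D : ℝ) := Real.lt_sqrt_of_sq_lt (by exact_mod_cast hD_ge)
  constructor
  · set α : ℤ√D := ⟨2 * p ^ 2, 1⟩
    have hα : α * star α = 1 := by
      ext <;> simp [α, hD]; ring
    refine ⟨toReal hD0 ∘ ![1, α, star α, ((4 * p ^ 2 : ℤ) : ℤ√D), ((2 * p : ℤ) : ℤ√D)],
      fun i => ⟨_, _, toReal_apply hD0 _⟩, map_one _, ?_, ?_, ?_⟩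
    · show toReal hD0 α * toReal hD0 (star α) = toReal hD0 1
      rw [← map_mul, hα]
    · show toReal hD0 α + toReal hD0 (star α) = toReal hD0 ((4 * p ^ 2 : ℤ) : ℤ√D)
      rw [← map_add]
      congr 1
      ext <;> simp only [α, re_add, re_star, re_intCast, im_add, im_star, im_intCast] <;> ring
    · show toReal hD0 ((2 * p : ℤ) : ℤ√D) * toReal hD0 ((2 * p : ℤ) : ℤ√D) =
        toReal hD0 ((4 * p ^ 2 : ℤ) : ℤ√D)
      rw [← map_mul, ← Int.cast_mul]
      ring_nf
  · intro x hx h0 h12 h123 h44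
    choose z hz using fun i => exists_toReal_eq hD0 (hx i)
    have hinj := toReal_injective hD0 fun n => (Int.mul_self_ne_four_mul_sub_one n _).symm
    have hz12 : z 1 * z 2 = 1 := hinj (by rw [map_mul, map_one, hz, hz, h12, h0])
    have hz44 : z 4 * z 4 = z 1 + z 2 := hinj (by rw [map_mul, map_add, hz, hz, hz, h44, h123])
    have hsum := two_mul_sqrt_le_abs_toReal_add_abs_toReal hD0 hz12
      (im_ne_zero_of_mul_eq_one_of_add_eq_mul_self (by linarith) hz12 hz44)
    rw [hz, hz] at hsum
    by_contra! hsmall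
    norm_num at hsmall
    linarith

theorem stmt_4 (p : ℤ) (hp : 13 ≤ p) (hsf : Squarefree (4 * p ^ 4 - 1)) :
    (∃ x : Fin 5 → ℝ,
      (∀ i, ∃ u v : ℤ, x i = (u : ℝ) + (v : ℝ) * Real.sqrt ((4 * p ^ 4 - 1 : ℤ) : ℝ)) ∧
      x 0 = 1 ∧ x 1 * x 2 = x 0 ∧ x 1 + x 2 = x 3 ∧ x 4 * x 4 = x 3) ∧
    (∀ x : Fin 5 → ℝ,
      (∀ i, ∃ u v : ℤ, x i = (u : ℝ) + (v : ℝ) * Real.sqrt ((4 * p ^ 4 - 1 : ℤ) : ℝ)) →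
      x 0 = 1 → x 1 * x 2 = x 0 → x 1 + x 2 = x 3 → x 4 * x 4 = x 3 →
      |x 1| > 2 ^ 2 ^ 3 ∨ |x 2| > 2 ^ 2 ^ 3) :=
  stmt_4_general p hp
end

section
/- Let n > 1 and set x̃_1 = 1, x̃_2 = 2, and x̃_{i+1} = x̃_i^2 for 2 ≤ i ≤ n-1 (so x̃_i = 2^(2^(i-2)) for i ≥ 2). Suppose y_1, ..., y_n are elements of a commutative ring K of characteristic 0 such that: y_i = 1 whenever x̃_i = 1; y_i + y_j = y_k whenever x̃_i + x̃_j = x̃_k (for all i, j, k in {1,...,n}); and y_i · y_j = y_k whenever x̃_i · x̃_j = x̃_k. Then y_i = x̃_i (as an element of K, via the canonical map Z → K) for every i. -/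
theorem stmt_5 {K : Type*} [CommRing K] [CharZero K] {n : ℕ} (hn : 1 < n)
    (x : Fin n → ℤ)
    (hx : ∀ i : Fin n, x i = if i.val = 0 then 1 else 2 ^ 2 ^ (i.val - 1))
    (y : Fin n → K)
    (h1 : ∀ i, x i = 1 → y i = 1)
    (hadd : ∀ i j k, x i + x j = x k → y i + y j = y k)
    (hmul : ∀ i j k, x i * x j = x k → y i * y j = y k) :
    ∀ i, y i = (x i : K) := by
  have key : ∀ m : ℕ, ∀ hm : m < n, y ⟨m, hm⟩ = (x ⟨m, hm⟩ : K) := by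
    intro m
    induction m using Nat.strong_induction_on with
    | _ m ih =>
      intro hm
      match m with
      | 0 =>
        have hx0 : x ⟨0, hm⟩ = 1 := by rw [hx]; simp
        rw [h1 _ hx0, hx0]; simp
      | 1 =>
        have h0 : (0 : ℕ) < n := by omega
        have hx0 : x ⟨0, h0⟩ = 1 := by rw [hx]; simp
        have hx1 : x ⟨1, hm⟩ = 2 := by rw [hx]; simp
        have := hadd ⟨0, h0⟩ ⟨0, h0⟩ ⟨1, hm⟩ (by rw [hx0, hx1]; ring)
        rw [← this, ih 0 (by omega) h0, hx0, hx1]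
        push_cast; ring
      | (k+2) =>
        have hp : k + 1 < n := by omega
        have hxp : x ⟨k+1, hp⟩ = 2 ^ 2 ^ k := by rw [hx]; simp
        have hxm : x ⟨k+2, hm⟩ = 2 ^ 2 ^ (k+1) := by rw [hx]; simp
        have hmul' : x ⟨k+1, hp⟩ * x ⟨k+1, hp⟩ = x ⟨k+2, hm⟩ := by
          rw [hxp, hxm, ← pow_add, ← two_mul, pow_succ, mul_comm]
        have := hmul _ _ _ hmul'
        rw [← this, ih (k+1) (by omega) hp, ← Int.cast_mul, hmul']
  intro i
  have := key i.val i.isLt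
  simpa using this
end

section
/- Every system S of equations in two complex variables x1, x2, where each equation has one of the forms x_i = 1, x_i + x_j = x_k, or x_i · x_j = x_k with i, j, k ∈ {1, 2}, that is consistent over C, has a solution (x̂1, x̂2) belonging to the finite set {(0,0), (0,1), (1,0), (1/2,1), (1,1/2), (1,1), (1,2), (2,1)}. In particular both coordinates of this solution have absolute value at most 2. -/
inductive Eqn2 : Type
  | one : Fin 2 → Eqn2
  | add : Fin 2 → Fin 2 → Fin 2 → Eqn2
  | mul : Fin 2 → Fin 2 → Fin 2 → Eqn2

def Eqn2.sat (x : Fin 2 → ℂ) : Eqn2 → Prop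
  | Eqn2.one i => x i = 1
  | Eqn2.add i j k => x i + x j = x k
  | Eqn2.mul i j k => x i * x j = x k

/-!
Say that `y` specializes `x` if `y` satisfies every equation that `x` satisfies; it suffices to
find, for every point `x`, a specialization in the list. If no coordinate of `x` is `1`, no equation
`x_i = 1` holds and `(0, 0)` satisfies all the others. Otherwise, up to swapping the variables,
`x = (1, b)`. For `b ∈ {0, 1/2, 1}` take `x` itself; for `b = -1` no additive equation holds and
`(1, 1)` satisfies the others; for any other `b` the only equations that can hold at `(1, b)`
are `x₁ = 1`, `x₁ · x₁ = x₁`, `x₁ · x₂ = x₂`, `x₂ · x₁ = x₂` and `x₁ + x₁ = x₂`, all true at `(1, 2)`.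
-/

namespace Eqn2

def comap (σ : Fin 2 → Fin 2) : Eqn2 → Eqn2
  | one i => one (σ i)
  | add i j k => add (σ i) (σ j) (σ k)
  | mul i j k => mul (σ i) (σ j) (σ k)

theorem sat_comap (σ : Fin 2 → Fin 2) (x : Fin 2 → ℂ) (e : Eqn2) :
    (e.comap σ).sat x ↔ e.sat (x ∘ σ) := by
  cases e <;> rfl

def Specializes (x y : Fin 2 → ℂ) : Prop := ∀ e : Eqn2, e.sat x → e.sat y

theorem specializes_iff {x y : Fin 2 → ℂ} : Specializes x y ↔
    (∀ i, x i = 1 → y i = 1) ∧ (∀ i j k, x i + x j = x k → y i + y j = y k) ∧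
      (∀ i j k, x i * x j = x k → y i * y j = y k) :=
  ⟨fun h => ⟨fun i => h (one i), fun i j k => h (add i j k), fun i j k => h (mul i j k)⟩,
    fun ⟨h1, h2, h3⟩ e => by cases e; exacts [h1 _, h2 _ _ _, h3 _ _ _]⟩

theorem Specializes.refl (x : Fin 2 → ℂ) : Specializes x x := fun _ => id

theorem Specializes.comp {x y : Fin 2 → ℂ} (h : Specializes x y) (σ : Fin 2 → Fin 2) :
    Specializes (x ∘ σ) (y ∘ σ) := fun e he =>
  (sat_comap σ y e).1 (h _ ((sat_comap σ x e).2 he))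

theorem specializes_zero {x : Fin 2 → ℂ} (hx : ∀ i, x i ≠ 1) : Specializes x 0 :=
  specializes_iff.2 ⟨fun i h => (hx i h).elim, fun _ _ _ _ => by simp, fun _ _ _ _ => by simp⟩

theorem specializes_one {x : Fin 2 → ℂ} (hx : ∀ i j k, x i + x j ≠ x k) : Specializes x 1 :=
  specializes_iff.2 ⟨fun _ _ => rfl, fun i j k h => (hx i j k h).elim, fun _ _ _ _ => by simp⟩

theorem specializes_one_two {b : ℂ} (h0 : b ≠ 0) (hhalf : b ≠ 1 / 2) (h1 : b ≠ 1)
    (hm1 : b ≠ -1) : Specializes ![1, b] ![1, 2] := by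
  simp only [specializes_iff, Fin.forall_fin_two, Matrix.cons_val_zero, Matrix.cons_val_one,
    Matrix.cons_val_fin_one]
  grind

def smallSolutions : Set (ℂ × ℂ) :=
  {(0, 0), (0, 1), (1, 0), (1 / 2, 1), (1, 1 / 2), (1, 1), (1, 2), (2, 1)}

theorem swap_mem_smallSolutions {p : ℂ × ℂ} (hp : p ∈ smallSolutions) :
    p.swap ∈ smallSolutions := by
  simp only [smallSolutions, Set.mem_insert_iff, Set.mem_singleton_iff] at hp ⊢
  rcases hp with rfl | rfl | rfl | rfl | rfl | rfl | rfl | rfl <;> simp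

theorem norm_le_two_of_mem_smallSolutions {p : ℂ × ℂ} (hp : p ∈ smallSolutions) :
    ‖p.1‖ ≤ 2 ∧ ‖p.2‖ ≤ 2 := by
  simp only [smallSolutions, Set.mem_insert_iff, Set.mem_singleton_iff] at hp
  rcases hp with rfl | rfl | rfl | rfl | rfl | rfl | rfl | rfl <;> norm_num

theorem exists_specializes_of_apply_zero_eq_one {x : Fin 2 → ℂ} (hx : x 0 = 1) :
    ∃ y, Specializes x y ∧ (y 0, y 1) ∈ smallSolutions := by
  obtain ⟨b, rfl⟩ : ∃ b, x = ![1, b] := ⟨x 1, by ext i; fin_cases i <;> simp [hx]⟩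
  by_cases hb : b = 0 ∨ b = 1 / 2 ∨ b = 1
  · refine ⟨_, Specializes.refl _, ?_⟩
    rcases hb with rfl | rfl | rfl <;> simp [smallSolutions]
  obtain ⟨h0, hhalf, h1⟩ : b ≠ 0 ∧ b ≠ 1 / 2 ∧ b ≠ 1 := by simpa only [not_or] using hb
  rcases eq_or_ne b (-1) with rfl | hm1
  · refine ⟨1, specializes_one ?_, by simp [smallSolutions]⟩
    simp only [Fin.forall_fin_two]
    norm_num
  · exact ⟨![1, 2], specializes_one_two h0 hhalf h1 hm1, by simp [smallSolutions]⟩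

theorem exists_specializes_mem_smallSolutions (x : Fin 2 → ℂ) :
    ∃ y, Specializes x y ∧ (y 0, y 1) ∈ smallSolutions := by
  by_cases h0 : x 0 = 1
  · exact exists_specializes_of_apply_zero_eq_one h0
  by_cases h1 : x 1 = 1
  · obtain ⟨y, hxy, hy⟩ := exists_specializes_of_apply_zero_eq_one (x := x ∘ Fin.rev) h1
    refine ⟨y ∘ Fin.rev, ?_, swap_mem_smallSolutions hy⟩
    simpa [Function.comp_assoc, Fin.rev_involutive.comp_self] using hxy.comp Fin.rev
  · exact ⟨0, specializes_zero (Fin.forall_fin_two.2 ⟨h0, h1⟩), by simp [smallSolutions]⟩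

end Eqn2

theorem stmt_8 (S : Set Eqn2) (h : ∃ x : Fin 2 → ℂ, ∀ e ∈ S, e.sat x) :
    ∃ x : Fin 2 → ℂ, (∀ e ∈ S, e.sat x) ∧
      (x 0, x 1) ∈ ({(0, 0), (0, 1), (1, 0), (1 / 2, 1), (1, 1 / 2), (1, 1), (1, 2), (2, 1)} :
        Set (ℂ × ℂ)) ∧
      (∀ i, ‖x i‖ ≤ 2) := by
  obtain ⟨x, hx⟩ := h
  obtain ⟨y, hxy, hy⟩ := Eqn2.exists_specializes_mem_smallSolutions x
  exact ⟨y, fun e he => hxy e (hx e he), hy,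
    Fin.forall_fin_two.2 (Eqn2.norm_le_two_of_mem_smallSolutions hy)⟩
end

section
/- Let K be a commutative ring. For a subset A ⊆ K, call f: A → K arithmetic if: f(1) = 1 whenever 1 ∈ A; f(a+b) = f(a) + f(b) whenever a, b, a+b ∈ A; and f(a·b) = f(a)·f(b) whenever a, b, a·b ∈ A. Call r ∈ K arithmetically fixed with an n-element neighbourhood if there is a finite set A ⊆ K with r ∈ A and card(A) ≤ n such that every arithmetic map f: A → K satisfies f(r) = r. Then for each n ≥ 3, the set K̃_n of elements of K that are arithmetically fixed with an n-element neighbourhood has cardinality at most (n+1)^(n²+n) + 2. -/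
def Arithmetic {K : Type*} [CommRing K] (A : Set K) (f : K → K) : Prop :=
  ((1 : K) ∈ A → f 1 = 1) ∧
  (∀ a b, a ∈ A → b ∈ A → a + b ∈ A → f (a + b) = f a + f b) ∧
  (∀ a b, a ∈ A → b ∈ A → a * b ∈ A → f (a * b) = f a * f b)

def ArithFixed {K : Type*} [CommRing K] (n : ℕ) (r : K) : Prop :=
  ∃ A : Finset K, r ∈ A ∧ A.card ≤ n ∧
    ∀ f : K → K, Arithmetic (A : Set K) f → f r = r

lemma Arithmetic.mono' {K : Type*} [CommRing K] {A B : Set K} (h : A ⊆ B) {f : K → K}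
    (hf : Arithmetic B f) : Arithmetic A f :=
  ⟨fun h1 => hf.1 (h h1),
   fun a b ha hb hab => hf.2.1 a b (h ha) (h hb) (h hab),
   fun a b ha hb hab => hf.2.2 a b (h ha) (h hb) (h hab)⟩

open Classical in
noncomputable def idxOf {K : Type*} {n : ℕ} (x : Fin n → K) (z : K) : Option (Fin n) :=
  if h : ∃ l, x l = z then some h.choose else none

lemma idxOf_eq {K : Type*} {n : ℕ} {x : Fin n → K} (hx : Function.Injective x)
    {l : Fin n} {z : K} (h : x l = z) : idxOf x z = some l := by
  rw [idxOf, dif_pos ⟨l, h⟩]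
  congr 1
  exact hx ((Exists.choose_spec (⟨l, h⟩ : ∃ l, x l = z)).trans h.symm)

lemma idxOf_some {K : Type*} {n : ℕ} {x : Fin n → K} {z : K} {l : Fin n}
    (h : idxOf x z = some l) : x l = z := by
  rw [idxOf] at h
  split_ifs at h with h'
  injection h with h2
  rw [← h2]
  exact h'.choose_spec

noncomputable def codeOf {K : Type*} [CommRing K] {n : ℕ} (x : Fin n → K) :
    Sym2 (Fin n) → Option (Fin n) × Option (Fin n) :=
  Sym2.lift ⟨fun i j => (idxOf x (x i + x j), idxOf x (x i * x j)), by
    intro i j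
    dsimp only
    rw [add_comm, mul_comm]⟩

lemma code_transfer_add {K : Type*} [CommRing K] {n : ℕ} {x y : Fin n → K}
    (hx : Function.Injective x) (h : codeOf x = codeOf y)
    {i j l : Fin n} (hl : x l = x i + x j) : y l = y i + y j := by
  have h2 := congrFun h s(i, j)
  rw [codeOf, codeOf, Sym2.lift_mk, Sym2.lift_mk] at h2
  dsimp only at h2
  injection h2 with e1 e2
  refine idxOf_some (l := l) ?_
  rw [← e1]
  exact idxOf_eq hx hl

lemma code_transfer_mul {K : Type*} [CommRing K] {n : ℕ} {x y : Fin n → K}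
    (hx : Function.Injective x) (h : codeOf x = codeOf y)
    {i j l : Fin n} (hl : x l = x i * x j) : y l = y i * y j := by
  have h2 := congrFun h s(i, j)
  rw [codeOf, codeOf, Sym2.lift_mk, Sym2.lift_mk] at h2
  dsimp only at h2
  injection h2 with e1 e2
  refine idxOf_some (l := l) ?_
  rw [← e2]
  exact idxOf_eq hx hl

theorem stmt_12 (K : Type*) [CommRing K] (n : ℕ) (hn : 3 ≤ n) :
    {r : K | ArithFixed n r}.Finite ∧
    Nat.card {r : K | ArithFixed n r} ≤ (n + 1) ^ (n ^ 2 + n) + 2 := by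
  classical
  haveI : NeZero n := ⟨by omega⟩
  set S := {r : K | ArithFixed n r} with hSdef
  by_cases hbig : ∃ B : Finset K, B.card = n
  · -- main case: K has at least n elements
    have hext : ∀ A : Finset K, A.card ≤ n → ∃ B, A ⊆ B ∧ B.card = n := by
      intro A hA
      cases finite_or_infinite K with
      | inl h =>
        have : Fintype K := Fintype.ofFinite K
        obtain ⟨B0, hB0⟩ := hbig
        exact Finset.exists_superset_card_eq hA (le_trans (le_of_eq hB0.symm) B0.card_le_univ)
      | inr h => exact Infinite.exists_superset_card_eq A n hA
    have key : ∀ r : S, ∃ x : Fin n → K, Function.Injective x ∧ x 0 = (r : K) ∧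
        ∀ f : K → K, Arithmetic (Set.range x) f → f r = r := by
      rintro ⟨r, hr⟩
      obtain ⟨A, hrA, hcard, hfix⟩ := hr
      obtain ⟨B, hAB, hBcard⟩ := hext A hcard
      have hrB : r ∈ B := hAB hrA
      let e : B ≃ Fin n := B.equivFinOfCardEq hBcard
      let σ := Equiv.swap (0 : Fin n) (e ⟨r, hrB⟩)
      let x : Fin n → K := fun i => ((e.symm (σ i)) : K)
      have hxinj : Function.Injective x := by
        intro i j hij
        exact σ.injective (e.symm.injective (Subtype.ext hij))
      have hx0 : x 0 = r := by
        show ((e.symm (σ 0)) : K) = r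
        rw [show σ 0 = e ⟨r, hrB⟩ from Equiv.swap_apply_left _ _, Equiv.symm_apply_apply]
      have hrange : Set.range x = (B : Set K) := by
        ext z
        constructor
        · rintro ⟨i, rfl⟩
          exact (e.symm (σ i)).2
        · intro hz
          refine ⟨σ (e ⟨z, hz⟩), ?_⟩
          show ((e.symm (σ (σ (e ⟨z, hz⟩)))) : K) = z
          rw [Equiv.swap_apply_self, Equiv.symm_apply_apply]
      refine ⟨x, hxinj, hx0, ?_⟩
      intro f hf
      apply hfix
      apply Arithmetic.mono' _ (hrange ▸ hf)
      exact_mod_cast hAB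
    choose xf hinj h0 hfix using key
    have Finj : Function.Injective (fun r : S => codeOf (xf r)) := by
      intro r r' hcode
      simp only at hcode
      set X := xf r with hX
      set Y := xf r' with hY
      by_cases h1Y : ∃ l, Y l = 1
      · -- forward map f : X l ↦ Y l is arithmetic
        let f : K → K := fun z => if h : ∃ l, X l = z then Y h.choose else z
        have hfX : ∀ l, f (X l) = Y l := by
          intro l
          have hex : ∃ m, X m = X l := ⟨l, rfl⟩
          show (if h : ∃ m, X m = X l then Y h.choose else X l) = Y l
          rw [dif_pos hex]
          congr 1
          exact hinj r hex.choose_spec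
        have harith : Arithmetic (Set.range X) f := by
          refine ⟨?_, ?_, ?_⟩
          · rintro ⟨i, hi⟩
            have hf1 : f 1 = Y i := by rw [← hi]; exact hfX i
            rw [hf1]
            obtain ⟨l, hl⟩ := h1Y
            have hXl : X l = X i * X l := by rw [hi, one_mul]
            have h3 : Y l = Y i * Y l := code_transfer_mul (hinj r) hcode hXl
            rw [hl, mul_one] at h3
            exact h3.symm
          · rintro a b ⟨i, rfl⟩ ⟨j, rfl⟩ ⟨l, hl⟩
            rw [← hl, hfX, hfX, hfX]
            exact code_transfer_add (hinj r) hcode hl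
          · rintro a b ⟨i, rfl⟩ ⟨j, rfl⟩ ⟨l, hl⟩
            rw [← hl, hfX, hfX, hfX]
            exact code_transfer_mul (hinj r) hcode hl
        have hfr := hfix r f harith
        rw [← h0 r, hfX] at hfr
        exact Subtype.ext (by rw [← h0 r', ← h0 r, ← hX, ← hY, hfr])
      · -- backward map g : Y l ↦ X l is arithmetic (1 ∉ range Y)
        let g : K → K := fun z => if h : ∃ l, Y l = z then X h.choose else z
        have hgY : ∀ l, g (Y l) = X l := by
          intro l
          have hex : ∃ m, Y m = Y l := ⟨l, rfl⟩
          show (if h : ∃ m, Y m = Y l then X h.choose else Y l) = X l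
          rw [dif_pos hex]
          congr 1
          exact hinj r' hex.choose_spec
        have harith : Arithmetic (Set.range Y) g := by
          refine ⟨?_, ?_, ?_⟩
          · rintro ⟨l, hl⟩
            exact absurd ⟨l, hl⟩ h1Y
          · rintro a b ⟨i, rfl⟩ ⟨j, rfl⟩ ⟨l, hl⟩
            rw [← hl, hgY, hgY, hgY]
            exact code_transfer_add (hinj r') hcode.symm hl
          · rintro a b ⟨i, rfl⟩ ⟨j, rfl⟩ ⟨l, hl⟩
            rw [← hl, hgY, hgY, hgY]
            exact code_transfer_mul (hinj r') hcode.symm hl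
        have hgr := hfix r' g harith
        rw [← h0 r', hgY] at hgr
        exact Subtype.ext (by rw [← h0 r', ← h0 r, ← hX, ← hY, hgr])
    have hfinS : Finite S := Finite.of_injective _ Finj
    have hcardE : Nat.card (Sym2 (Fin n) → Option (Fin n) × Option (Fin n))
        = (n + 1) ^ (n ^ 2 + n) := by
      rw [Nat.card_eq_fintype_card, Fintype.card_fun, Fintype.card_prod, Fintype.card_option,
        Fintype.card_fin, Sym2.card, Fintype.card_fin]
      rw [show (n + 1) * (n + 1) = (n + 1) ^ 2 by ring, ← pow_mul]
      congr 1
      rw [Nat.choose_two_right, Nat.add_sub_cancel]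
      have h2 : 2 ∣ (n + 1) * n := by
        rw [Nat.mul_comm]
        exact (Nat.even_mul_succ_self n).two_dvd
      rw [Nat.mul_div_cancel' h2]
      ring
    constructor
    · exact Set.finite_coe_iff.mp hfinS
    · have h1 : Nat.card S ≤ Nat.card (Sym2 (Fin n) → Option (Fin n) × Option (Fin n)) :=
        Nat.card_le_card_of_injective _ Finj
      rw [hcardE] at h1
      omega
  · -- K has fewer than n elements
    have hKfin : Finite K := by
      by_contra h
      rw [not_finite_iff_infinite] at h
      obtain ⟨B, _, hB⟩ := Infinite.exists_superset_card_eq (∅ : Finset K) n (by simp)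
      exact hbig ⟨B, hB⟩
    have : Fintype K := Fintype.ofFinite K
    have hKlt : Fintype.card K < n := by
      by_contra h
      push_neg at h
      obtain ⟨B, _, hB⟩ := Finset.exists_subset_card_eq (s := (Finset.univ : Finset K)) (n := n) (by simpa using h)
      exact hbig ⟨B, hB⟩
    have hfin : S.Finite := Set.toFinite S
    refine ⟨hfin, ?_⟩
    have h1 : Nat.card S ≤ Nat.card K :=
      Nat.card_le_card_of_injective _ Subtype.val_injective
    have h1b : Nat.card S ≤ Fintype.card K :=
      le_trans h1 (le_of_eq Nat.card_eq_fintype_card)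
    have h2 : n ≤ (n + 1) ^ (n ^ 2 + n) := by
      calc n ≤ n + 1 := by omega
      _ = (n + 1) ^ 1 := (pow_one _).symm
      _ ≤ (n + 1) ^ (n ^ 2 + n) := Nat.pow_le_pow_right (by omega) (by nlinarith)
    omega
end

section
/- Let K be a commutative ring and define arithmetic maps and arithmetically fixed elements as follows: f: A → K (A ⊆ K) is arithmetic if f(1)=1 when 1 ∈ A, f(a+b)=f(a)+f(b) whenever a,b,a+b ∈ A, and f(ab)=f(a)f(b) whenever a,b,ab ∈ A; r ∈ K is arithmetically fixed with a 1-element neighbourhood if there is A ⊆ K with r ∈ A, card(A) ≤ 1, and every arithmetic f: A → K fixes r. Then the set of such elements r is exactly {0, 1} (assuming 0 ≠ 1 in K). -/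
theorem stmt_13 (K : Type*) [CommRing K] (h01 : (0 : K) ≠ 1) :
    {r : K | ArithFixed 1 r} = {0, 1} := by
  classical
  ext r
  simp only [Set.mem_setOf_eq, Set.mem_insert_iff, Set.mem_singleton_iff]
  constructor
  · rintro ⟨A, hrA, hcard, hfix⟩
    by_contra h
    push_neg at h
    obtain ⟨hr0, hr1⟩ := h
    have hA : A = {r} := by
      apply Finset.eq_singleton_iff_unique_mem.mpr
      refine ⟨hrA, fun x hx => ?_⟩
      by_contra hxr
      have : 2 ≤ A.card := Finset.one_lt_card.mpr ⟨x, hx, r, hrA, hxr⟩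
      omega
    subst hA
    have := hfix (fun x => if x = r then 0 else x) ?_
    · simp at this
      exact hr0 this.symm
    · refine ⟨?_, ?_, ?_⟩
      · intro h1
        simp only [Finset.coe_singleton, Set.mem_singleton_iff] at h1
        exact absurd h1.symm hr1
      · intro a b ha hb hab
        simp only [Finset.coe_singleton, Set.mem_singleton_iff] at ha hb hab
        subst ha; subst hb
        exact (hr0 (by linear_combination hab)).elim
      · intro a b ha hb hab
        simp only [Finset.coe_singleton, Set.mem_singleton_iff] at ha hb hab
        subst ha; subst hb
        simp [hab]
  · rintro (rfl | rfl)
    · refine ⟨{0}, by simp, by simp, fun f hf => ?_⟩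
      have := hf.2.1 0 0 (by simp) (by simp) (by simp)
      simp at this
      exact this
    · refine ⟨{1}, by simp, by simp, fun f hf => ?_⟩
      exact hf.1 (by simp)
end

section
/- Let p > 2^256 be a prime number and R = Z[1/p] ⊆ Q. The system x1 = 1, x2·x3 = x1, x3 + x4 = x2, x4·x5 = x6, x7 + x7 = x8, x1 + x9 = x8, x7 + x9 = x10, x9·x10 = x6 has a solution in R^10, and every solution (x1,...,x10) ∈ R^10 satisfies |x2| > 2^(2^8) or |x3| > 2^(2^8). -/
lemma aux_dvd (n : ℤ) (hn : n ≠ 0) : ∃ s u : ℤ, n * u = (2*s-1)*(3*s-1) := by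
  suffices h : ∃ s : ℤ, n ∣ (2*s-1)*(3*s-1) by
    obtain ⟨s, u, hu⟩ := h
    exact ⟨s, u, hu.symm⟩
  set k := (n.natAbs).factorization 2 with hk
  set m := n.natAbs / 2^k with hmdef
  have hm2 : 2^k * m = n.natAbs := Nat.ordProj_mul_ordCompl_eq_self n.natAbs 2
  have hmodd : ¬ 2 ∣ m := Nat.not_dvd_ordCompl Nat.prime_two (Int.natAbs_ne_zero.mpr hn)
  have hModd : Odd (m : ℤ) := by
    have : Odd m := Nat.odd_iff.mpr (Nat.two_dvd_ne_zero.mp hmodd)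
    exact_mod_cast this
  obtain ⟨c, hc⟩ := hModd
  have hcop2m : IsCoprime ((2:ℤ)^k) (m : ℤ) := by
    apply IsCoprime.pow_left
    exact ⟨-c, 1, by linarith⟩
  have hcop32 : IsCoprime (3:ℤ) ((2:ℤ)^k) := by
    apply IsCoprime.pow_right
    exact ⟨1, -1, by ring⟩
  obtain ⟨u, v, huv⟩ := hcop2m
  obtain ⟨α, β, hαβ⟩ := hcop32
  set s : ℤ := (c+1)*(u*2^k) + α*(v*m) with hs
  refine ⟨s, ?_⟩
  have h1 : u*2^k = 1 - v*m := by linarith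
  have h2 : v*(m:ℤ) = 1 - u*2^k := by linarith
  have hMdvd : (m : ℤ) ∣ 2*s - 1 := by
    refine ⟨1 + v*(2*α-2*c-2), ?_⟩
    rw [hs]
    linear_combination 2*(c+1)*h1 - hc
  have h2k : ((2:ℤ)^k) ∣ 3*s - 1 := by
    refine ⟨-β + u*(3*c+3-3*α), ?_⟩
    rw [hs]
    linear_combination 3*α*h2 + hαβ
  have hprod : ((m:ℤ) * 2^k) ∣ (2*s-1)*(3*s-1) := mul_dvd_mul hMdvd h2k
  have hn2 : ((m:ℤ) * 2^k) = (n.natAbs : ℤ) := by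
    rw [← hm2]; push_cast; ring
  rw [hn2] at hprod
  exact (Int.natAbs_dvd).mp hprod

theorem stmt_18 (p : ℤ) (hp : Prime p) (hbig : 2 ^ 256 < p) :
    (∃ x : Fin 10 → ℚ, (∀ i, ∃ (z : ℤ) (m : ℕ), x i = (z : ℚ) / ((p : ℚ) ^ m)) ∧
      x 0 = 1 ∧ x 1 * x 2 = x 0 ∧ x 2 + x 3 = x 1 ∧ x 3 * x 4 = x 5 ∧
      x 6 + x 6 = x 7 ∧ x 0 + x 8 = x 7 ∧ x 6 + x 8 = x 9 ∧ x 8 * x 9 = x 5) ∧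
    (∀ x : Fin 10 → ℚ, (∀ i, ∃ (z : ℤ) (m : ℕ), x i = (z : ℚ) / ((p : ℚ) ^ m)) →
      x 0 = 1 → x 1 * x 2 = x 0 → x 2 + x 3 = x 1 → x 3 * x 4 = x 5 →
      x 6 + x 6 = x 7 → x 0 + x 8 = x 7 → x 6 + x 8 = x 9 → x 8 * x 9 = x 5 →
      |x 1| > 2 ^ 2 ^ 8 ∨ |x 2| > 2 ^ 2 ^ 8) := by
  have hp1 : (1:ℤ) < p := lt_trans (by norm_num) hbig
  have hppos : (0:ℚ) < (p:ℚ) := by exact_mod_cast lt_trans zero_lt_one hp1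
  have hp0 : (p:ℚ) ≠ 0 := ne_of_gt hppos
  have hpQ1 : (1:ℚ) < (p:ℚ) := by exact_mod_cast hp1
  have hbigQ : ((2:ℚ))^(2^8 : ℕ) < (p:ℚ) := by
    have h : ((2:ℤ))^(256:ℕ) < p := hbig
    calc ((2:ℚ))^(2^8 : ℕ) = ((2:ℤ)^(256:ℕ) : ℚ) := by norm_num
    _ < (p:ℚ) := by exact_mod_cast h
  constructor
  · -- existence
    obtain ⟨s, u, hsu⟩ := aux_dvd (p^2 - 1) (by nlinarith)
    refine ⟨![1, p, 1/p, p - 1/p, p*u, (p^2-1)*u, s, 2*s, 2*s-1, 3*s-1], ?_, ?_, ?_, ?_, ?_, ?_, ?_, ?_, ?_⟩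
    · intro i
      fin_cases i
      · exact ⟨1, 0, by norm_num⟩
      · exact ⟨p, 0, by norm_num⟩
      · exact ⟨1, 1, by norm_num⟩
      · refine ⟨p^2 - 1, 1, ?_⟩
        show (p:ℚ) - 1/p = _
        push_cast; field_simp
      · refine ⟨p*u, 0, ?_⟩
        show (p:ℚ)*u = _
        push_cast; norm_num
      · refine ⟨(p^2-1)*u, 0, ?_⟩
        show ((p:ℚ)^2-1)*u = _
        push_cast; norm_num
      · refine ⟨s, 0, ?_⟩
        show (s:ℚ) = _
        norm_num
      · refine ⟨2*s, 0, ?_⟩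
        show 2*(s:ℚ) = _
        push_cast; norm_num
      · refine ⟨2*s-1, 0, ?_⟩
        show 2*(s:ℚ)-1 = _
        push_cast; norm_num
      · refine ⟨3*s-1, 0, ?_⟩
        show 3*(s:ℚ)-1 = _
        push_cast; norm_num
    · norm_num
    · show (p:ℚ) * (1/p) = 1; field_simp
    · show (1:ℚ)/p + ((p:ℚ) - 1/p) = p; ring
    · show ((p:ℚ) - 1/p) * ((p:ℚ)*u) = ((p:ℚ)^2-1)*u
      field_simp
    · show (s:ℚ) + s = 2*s; ring
    · show (1:ℚ) + (2*(s:ℚ)-1) = 2*s; ring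
    · show (s:ℚ) + (2*(s:ℚ)-1) = 3*(s:ℚ)-1; ring
    · show (2*(s:ℚ)-1) * (3*(s:ℚ)-1) = ((p:ℚ)^2-1)*u
      exact_mod_cast congrArg (fun t : ℤ => (t : ℚ)) hsu.symm
  · -- every solution has a large coordinate
    intro x hmem h0 h12 h23 h34 h66 h08 h68 h89
    obtain ⟨z6, m6, h6⟩ := hmem 6
    have hx8 : x 8 = 2 * x 6 - 1 := by rw [h0] at h08; linarith
    have hx9 : x 9 = 3 * x 6 - 1 := by rw [hx8] at h68; linarith
    have h8ne : x 8 ≠ 0 := by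
      rw [hx8]
      intro h
      have h6' : x 6 = 1/2 := by linarith
      rw [h6] at h6'
      have hzz : (2 * z6 : ℚ) = (p:ℚ)^m6 := by
        field_simp at h6'
        linarith
      have hz : (2 * z6 : ℤ) = p^m6 := by exact_mod_cast hzz
      have hdvd : (2:ℤ) ∣ p^m6 := ⟨z6, hz.symm⟩
      have h2p : (2:ℤ) ∣ p := (Int.prime_two).dvd_of_dvd_pow hdvd
      have hassoc := (Int.prime_two).associated_of_dvd hp h2p
      rcases Int.associated_iff.mp hassoc with h' | h' <;> omega
    have h9ne : x 9 ≠ 0 := by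
      rw [hx9]
      intro h
      have h6' : x 6 = 1/3 := by linarith
      rw [h6] at h6'
      have hzz : (3 * z6 : ℚ) = (p:ℚ)^m6 := by
        field_simp at h6'
        linarith
      have hz : (3 * z6 : ℤ) = p^m6 := by exact_mod_cast hzz
      have hdvd : (3:ℤ) ∣ p^m6 := ⟨z6, hz.symm⟩
      have h3p : (3:ℤ) ∣ p := Int.prime_three.dvd_of_dvd_pow hdvd
      have hassoc := Int.prime_three.associated_of_dvd hp h3p
      rcases Int.associated_iff.mp hassoc with h' | h' <;> omega
    have h5ne : x 5 ≠ 0 := by rw [← h89]; exact mul_ne_zero h8ne h9ne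
    have h3ne : x 3 ≠ 0 := by
      intro h; rw [h, zero_mul] at h34; exact h5ne h34.symm
    have hne12 : x 1 ≠ x 2 := by
      intro h; apply h3ne; linarith
    rw [h0] at h12
    have h1ne : x 1 ≠ 0 := by intro h; rw [h, zero_mul] at h12; norm_num at h12
    obtain ⟨z1, a, h1⟩ := hmem 1
    obtain ⟨z2, b, h2⟩ := hmem 2
    have hzz : (z1 : ℚ) * z2 = (p:ℚ)^(a+b) := by
      rw [h1, h2] at h12
      field_simp at h12
      rw [pow_add]
      linarith
    have hz : z1 * z2 = p^(a+b) := by exact_mod_cast hzz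
    have hdvd : z1 ∣ p^(a+b) := ⟨z2, hz.symm⟩
    obtain ⟨i, hi, hassoc⟩ := (dvd_prime_pow hp _).mp hdvd
    have habs : |x 1| = (p:ℚ)^i / (p:ℚ)^a := by
      rcases Int.associated_iff.mp hassoc with h' | h'
      · rw [h1, h']; push_cast
        rw [abs_div, abs_of_pos (pow_pos hppos i), abs_of_pos (pow_pos hppos a)]
      · rw [h1, h']; push_cast
        rw [abs_div, abs_neg, abs_of_pos (pow_pos hppos i), abs_of_pos (pow_pos hppos a)]
    have hx2 : x 2 = (x 1)⁻¹ := by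
      field_simp
      linarith [h12]
    rcases lt_trichotomy i a with hlt | heq | hgt
    · right
      have habs2 : |x 2| = (p:ℚ)^a / (p:ℚ)^i := by
        rw [hx2, abs_inv, habs, inv_div]
      have hpow : (p:ℚ)^a / (p:ℚ)^i = (p:ℚ)^(a-i) := by
        rw [pow_sub₀ _ hp0 hlt.le, div_eq_mul_inv]
      show (2:ℚ)^(2^8:ℕ) < |x 2|
      rw [habs2, hpow]
      calc ((2:ℚ))^(2^8:ℕ) < (p:ℚ) := hbigQ
      _ = (p:ℚ)^1 := (pow_one _).symm
      _ ≤ (p:ℚ)^(a-i) := pow_le_pow_right₀ (le_of_lt hpQ1) (by omega)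
    · exfalso
      rw [heq, div_self (pow_ne_zero a hp0)] at habs
      rcases (abs_eq (by norm_num : (0:ℚ) ≤ 1)).mp habs with h' | h'
      · apply hne12; rw [hx2, h']; norm_num
      · apply hne12; rw [hx2, h']; norm_num
    · left
      have hpow : (p:ℚ)^i / (p:ℚ)^a = (p:ℚ)^(i-a) := by
        rw [pow_sub₀ _ hp0 hgt.le, div_eq_mul_inv]
      show (2:ℚ)^(2^8:ℕ) < |x 1|
      rw [habs, hpow]
      calc ((2:ℚ))^(2^8:ℕ) < (p:ℚ) := hbigQ
      _ = (p:ℚ)^1 := (pow_one _).symm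
      _ ≤ (p:ℚ)^(i-a) := pow_le_pow_right₀ (le_of_lt hpQ1) (by omega)
end

section
/- For each integer x ≥ 2 and integer y ≥ 1, if 1 + x³(2+x)y² is a perfect square, then y ≥ x + x^(x-2). -/
-- binomial-ish bound
lemma lemA (n k : ℕ) : n ^ (k+1) + (k+1) * n ^ k ≤ (n+1) ^ (k+1) := by
  induction k with
  | zero => simp
  | succ k ih =>
    calc n ^ (k+2) + (k+2) * n ^ (k+1)
        ≤ (n+1) * (n ^ (k+1) + (k+1) * n ^ k) := by
          have h : (n+1) * (n ^ (k+1) + (k+1) * n ^ k) = n^(k+2) + (k+2)*n^(k+1) + (k+1)*n^k := by ring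
          omega
      _ ≤ (n+1) * (n+1)^(k+1) := Nat.mul_le_mul_left _ ih
      _ = (n+1) ^ (k+2) := by ring

lemma lemB {a : ℕ} (a1 : 1 < a) : ∀ m : ℕ, (m+1) * a ^ m ≤ Pell.yn a1 (m+1) := by
  intro m
  induction m with
  | zero => simp [Pell.yn_one]
  | succ m ih =>
    have hx := Pell.xn_ge_a_pow a1 (m+1)
    have := Pell.yn_succ a1 (m+1)
    calc (m+2) * a ^ (m+1) = a ^ (m+1) + ((m+1) * a ^ m) * a := by ring
      _ ≤ Pell.xn a1 (m+1) + Pell.yn a1 (m+1) * a :=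
          Nat.add_le_add hx (Nat.mul_le_mul_right a ih)
      _ = Pell.yn a1 (m+2) := (Pell.yn_succ a1 (m+1)).symm

lemma natMain (nx ny nz : ℕ) (hx : 2 ≤ nx) (hy : 1 ≤ ny)
    (heq : 1 + nx ^ 3 * (2 + nx) * ny ^ 2 = nz * nz) :
    nx + nx ^ (nx - 2) ≤ ny := by
  have a1 : 1 < nx + 1 := by omega
  have hprod : ((nx+1)*(nx+1) - 1) * (nx*ny) * (nx*ny) = nx ^ 3 * (2 + nx) * ny ^ 2 := by
    have h1 : (nx+1)*(nx+1) - 1 = nx*nx + 2*nx := by ring_nf; omega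
    rw [h1]; ring
  have key : nz * nz - ((nx+1)*(nx+1) - 1) * (nx*ny) * (nx*ny) = 1 := by omega
  obtain ⟨n, hz, hw⟩ := Pell.eq_pell a1 (x := nz) (y := nx*ny) key
  -- n ≥ nx
  have hn0 : n ≠ 0 := by
    rintro rfl
    rw [Pell.yn_zero] at hw
    have h2 : nx ≤ nx * ny := Nat.le_mul_of_pos_right nx (by omega)
    omega
  have hmod := Pell.yn_modEq_a_sub_one a1 n
  have ha : nx + 1 - 1 = nx := by omega
  rw [ha] at hmod
  have hdvd : nx ∣ n := by
    have h1 : nx ∣ Pell.yn a1 n := ⟨ny, hw.symm⟩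
    exact (Nat.modEq_zero_iff_dvd).1 ((Nat.modEq_zero_iff_dvd.2 h1).symm.trans hmod).symm
  have hnx : nx ≤ n := Nat.le_of_dvd (Nat.pos_of_ne_zero hn0) hdvd
  have hmono : Pell.yn a1 nx ≤ Pell.yn a1 n := (Pell.strictMono_y a1).monotone hnx
  have hgrow : nx * (nx+1) ^ (nx - 1) ≤ Pell.yn a1 nx := by
    have := lemB a1 (nx - 1)
    have h2 : nx - 1 + 1 = nx := by omega
    rw [h2] at this; exact this
  have hny : (nx+1) ^ (nx-1) ≤ ny := by
    have h3 : nx * (nx+1)^(nx-1) ≤ nx * ny := by omega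
    exact Nat.le_of_mul_le_mul_left h3 (by omega)
  have hA : nx + nx ^ (nx-2) ≤ (nx+1) ^ (nx-1) := by
    have := lemA nx (nx - 2)
    have h4 : nx - 2 + 1 = nx - 1 := by omega
    rw [h4] at this
    have h5 : nx ≤ nx ^ (nx - 1) := by
      calc nx = nx ^ 1 := (pow_one nx).symm
        _ ≤ nx ^ (nx-1) := Nat.pow_le_pow_right (by omega) (by omega)
    have h6 : nx ^ (nx-2) ≤ (nx - 1) * nx ^ (nx-2) := Nat.le_mul_of_pos_left _ (by omega)
    have h7 : nx - 2 + 1 = nx - 1 := by omega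
    calc nx + nx ^ (nx-2) ≤ nx ^ (nx-1) + (nx-1) * nx^(nx-2) := by omega
      _ = nx ^ (nx-2+1) + (nx-2+1) * nx^(nx-2) := by rw [h7]
      _ ≤ (nx+1)^(nx-2+1) := lemA nx (nx-2)
      _ = (nx+1)^(nx-1) := by rw [h7]
  omega

theorem stmt_19 (x y : ℤ) (hx : 2 ≤ x) (hy : 1 ≤ y)
    (h : ∃ z : ℤ, 1 + x ^ 3 * (2 + x) * y ^ 2 = z ^ 2) :
    x + x ^ (x - 2).toNat ≤ y := by
  obtain ⟨z, hz⟩ := h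
  set nx := x.toNat with hnx
  set ny := y.toNat with hny
  have hxx : (nx : ℤ) = x := Int.toNat_of_nonneg (by omega)
  have hyy : (ny : ℤ) = y := Int.toNat_of_nonneg (by omega)
  have heq : 1 + nx ^ 3 * (2 + nx) * ny ^ 2 = z.natAbs * z.natAbs := by
    have : (1 + (nx:ℤ) ^ 3 * (2 + nx) * ny ^ 2 : ℤ) = (z.natAbs : ℤ) * z.natAbs := by
      rw [hxx, hyy, Int.natAbs_mul_self', ← pow_two]; exact hz
    exact_mod_cast this
  have hmain := natMain nx ny z.natAbs (by omega) (by omega) heq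
  have htn : (x - 2).toNat = nx - 2 := by omega
  rw [htn]
  have : ((nx + nx ^ (nx-2) : ℕ) : ℤ) ≤ (ny : ℤ) := by exact_mod_cast hmain
  push_cast at this
  rw [hxx, hyy] at this
  exact this
end
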